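/- arXiv:2101.06903 — 3 statements merged into one kernel-verified Lean document; each statement's English description precedes it below -/
import Mathlib

section
/- Let (X, d) be a metric space, μ a Borel measure on X, x ∈ X, and n ≥ 1. Assume 0 < μ(B(x,r)) < ∞ for every r > 0 and the volume doubling property at x: μ(B(x,R)) ≤ (R/r)ⁿ μ(B(x,r)) for all 0 < r ≤ R. Then for every σ₀ ∈ (0,2) there is a constant C > 0, depending only on n and σ₀, such that for every σ ∈ [σ₀, 2) and every R > 0, (2−σ) ∫_{X∖{x}} min(R², d(x,z)²) / (μ(B(x, d(x,z))) · d(x,z)^σ) dμ(z) ≤ C R^{2−σ}. -/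
/-!
Split `{x}ᶜ` into the dyadic annuli `R 2^k ≤ d(x,z) < R 2^(k+1)`, `k ∈ ℤ`. On the `k`-th annulus
the denominator is at least `μ(B(x, R 2^k))`, while doubling bounds the measure of the annulus by
`2ⁿ μ(B(x, R 2^k))`; bounding `min(R², d²)/d^σ` by `R²/d^σ` and by `d^(2-σ)`, the annulus
contributes at most `2ⁿ R^(2-σ) (2-σ) min(2^(-kσ), 2^((k+1)(2-σ)))`. Over `k ≥ 0` this is a
geometric series of ratio `2^(-σ) ≤ 2^(-σ₀)`; over `k < 0` it is `2-σ` times a geometric series of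
ratio `2^(-(2-σ))`, and `t / (1 - 2^(-t)) ≤ 4 / log 2` for `0 < t ≤ 2` keeps it bounded as `σ → 2`.
-/

open MeasureTheory Metric

lemma two_rpow_neg_mul_natCast (s : ℝ) (m : ℕ) : (2 : ℝ) ^ (-(m * s)) = ((2 : ℝ) ^ (-s)) ^ m := by
  rw [← Real.rpow_natCast, ← Real.rpow_mul zero_le_two]
  ring_nf

lemma two_zpow_rpow (k : ℤ) (s : ℝ) : ((2 : ℝ) ^ k) ^ s = (2 : ℝ) ^ (k * s) := by
  rw [← Real.rpow_intCast, ← Real.rpow_mul zero_le_two]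

lemma div_one_sub_two_rpow_neg_le {t : ℝ} (ht0 : 0 < t) (ht2 : t ≤ 2) :
    t / (1 - (2 : ℝ) ^ (-t)) ≤ 4 / Real.log 2 := by
  have hlog : 0 < Real.log 2 := Real.log_pos one_lt_two
  have hpos : 0 < (2 : ℝ) ^ t := by positivity
  have hle : (2 : ℝ) ^ t ≤ 4 := by
    calc (2 : ℝ) ^ t ≤ 2 ^ (2 : ℝ) := Real.rpow_le_rpow_of_exponent_le one_le_two ht2
      _ = 4 := by norm_num
  have hge : 1 + t * Real.log 2 ≤ (2 : ℝ) ^ t := by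
    rw [Real.rpow_def_of_pos two_pos, mul_comm, add_comm]
    exact Real.add_one_le_exp _
  have hsub : 1 - (2 : ℝ) ^ (-t) = ((2 : ℝ) ^ t - 1) / 2 ^ t := by
    rw [Real.rpow_neg zero_le_two]; field_simp
  rw [hsub, div_div_eq_mul_div, div_le_div_iff₀ (by nlinarith) hlog]
  nlinarith [mul_le_mul_of_nonneg_left hle (mul_pos ht0 hlog).le]

lemma tsum_ofReal_le_of_le_geometric {q c : ℝ} (hq0 : 0 ≤ q) (hq1 : q < 1) (hc : 0 ≤ c)
    {b : ℕ → ℝ} (hb : ∀ m, b m ≤ c * q ^ m) :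
    ∑' m, ENNReal.ofReal (b m) ≤ ENNReal.ofReal (c / (1 - q)) := by
  calc ∑' m, ENNReal.ofReal (b m)
      ≤ ∑' m, ENNReal.ofReal c * ENNReal.ofReal q ^ m := by
        refine ENNReal.tsum_le_tsum fun m => ?_
        rw [← ENNReal.ofReal_pow hq0, ← ENNReal.ofReal_mul hc]
        exact ENNReal.ofReal_le_ofReal (hb m)
    _ = ENNReal.ofReal (c / (1 - q)) := by
        rw [ENNReal.tsum_mul_left, ENNReal.tsum_geometric, ← ENNReal.ofReal_one,
          ← ENNReal.ofReal_sub _ hq0, ← ENNReal.ofReal_inv_of_pos (by linarith),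
          ← ENNReal.ofReal_mul hc, div_eq_mul_inv]

noncomputable def dyadicWeight (σ : ℝ) (k : ℤ) : ℝ :=
  min ((2 : ℝ) ^ (-(k * σ))) ((2 : ℝ) ^ ((k + 1) * (2 - σ)))

lemma tsum_ofReal_dyadicWeight_le {σ₀ σ : ℝ} (hσ₀ : 0 < σ₀) (hσ₀σ : σ₀ ≤ σ) (hσ2 : σ < 2) :
    ∑' k : ℤ, ENNReal.ofReal ((2 - σ) * dyadicWeight σ k)
      ≤ ENNReal.ofReal (2 / (1 - (2 : ℝ) ^ (-σ₀)) + 4 / Real.log 2) := by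
  have hq₀ : (2 : ℝ) ^ (-σ₀) < 1 := Real.rpow_lt_one_of_one_lt_of_neg one_lt_two (by linarith)
  have hq : (2 : ℝ) ^ (-(2 - σ)) < 1 := Real.rpow_lt_one_of_one_lt_of_neg one_lt_two (by linarith)
  have hnat : ∀ m : ℕ, (2 - σ) * dyadicWeight σ m ≤ 2 * ((2 : ℝ) ^ (-σ₀)) ^ m := by
    intro m
    rw [← two_rpow_neg_mul_natCast]
    have hw : dyadicWeight σ m ≤ (2 : ℝ) ^ (-(m * σ₀)) :=
      (min_le_left _ _).trans (Real.rpow_le_rpow_of_exponent_le one_le_two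
        (by push_cast; nlinarith [(Nat.cast_nonneg m : (0 : ℝ) ≤ m)]))
    have hw0 : 0 ≤ dyadicWeight σ m := le_min (by positivity) (by positivity)
    nlinarith
  have hneg : ∀ m : ℕ,
      (2 - σ) * dyadicWeight σ (-(m + 1)) ≤ (2 - σ) * ((2 : ℝ) ^ (-(2 - σ))) ^ m := by
    intro m
    rw [← two_rpow_neg_mul_natCast]
    refine mul_le_mul_of_nonneg_left ((min_le_right _ _).trans (le_of_eq ?_)) (by linarith)
    push_cast; ring_nf

  rw [tsum_of_nat_of_neg_add_one ENNReal.summable ENNReal.summable,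
    ENNReal.ofReal_add (by positivity) (by positivity)]
  gcongr
  · exact tsum_ofReal_le_of_le_geometric (by positivity) hq₀ zero_le_two hnat
  · exact (tsum_ofReal_le_of_le_geometric (by positivity) hq (by linarith) hneg).trans
      (ENNReal.ofReal_le_ofReal (div_one_sub_two_rpow_neg_le (by linarith) (by linarith)))
lemma min_sq_div_rpow_le_dyadicWeight {R d σ : ℝ} {k : ℤ} (hR : 0 < R) (hσ0 : 0 ≤ σ)
    (hσ2 : σ ≤ 2) (hd : d ∈ Set.Ico (R * 2 ^ k) (R * 2 ^ (k + 1))) :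
    min (R ^ 2) (d ^ 2) / d ^ σ ≤ R ^ (2 - σ) * dyadicWeight σ k := by
  obtain ⟨hlo, hhi⟩ := hd
  have hr : 0 < R * 2 ^ k := by positivity
  have hd0 : 0 < d := hr.trans_le hlo
  rw [dyadicWeight, mul_min_of_nonneg _ _ (by positivity)]
  refine le_min ?_ ?_
  · calc min (R ^ 2) (d ^ 2) / d ^ σ ≤ R ^ 2 / (R * 2 ^ k) ^ σ :=
          div_le_div₀ (sq_nonneg R) (min_le_left _ _) (by positivity)
            (Real.rpow_le_rpow hr.le hlo hσ0)
      _ = R ^ (2 - σ) * 2 ^ (-(k * σ)) := by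
          rw [Real.mul_rpow hR.le (by positivity), two_zpow_rpow, Real.rpow_neg zero_le_two,
            Real.rpow_sub hR, Real.rpow_two]
          ring
  · calc min (R ^ 2) (d ^ 2) / d ^ σ ≤ d ^ (2 - σ) := by
          rw [Real.rpow_sub hd0, Real.rpow_two]
          exact div_le_div_of_nonneg_right (min_le_right _ _) (by positivity)
      _ ≤ (R * 2 ^ (k + 1)) ^ (2 - σ) := Real.rpow_le_rpow hd0.le hhi.le (by linarith)
      _ = R ^ (2 - σ) * 2 ^ ((k + 1) * (2 - σ)) := by
          rw [Real.mul_rpow hR.le (by positivity), two_zpow_rpow]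
          push_cast; rfl

section MetricMeasure

variable {X : Type*}

def dyadicAnnulus [PseudoMetricSpace X] (x : X) (R : ℝ) (k : ℤ) : Set X :=
  dist x ⁻¹' Set.Ico (R * 2 ^ k) (R * 2 ^ (k + 1))

lemma measurableSet_dyadicAnnulus [PseudoMetricSpace X] [MeasurableSpace X]
    [OpensMeasurableSpace X] (x : X) (R : ℝ) (k : ℤ) : MeasurableSet (dyadicAnnulus x R k) :=
  (continuous_const.dist continuous_id).measurable measurableSet_Ico

lemma dyadicAnnulus_subset_ball [PseudoMetricSpace X] (x : X) (R : ℝ) (k : ℤ) :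
    dyadicAnnulus x R k ⊆ ball x (R * 2 ^ (k + 1)) :=
  fun _ hz => mem_ball'.2 hz.2

lemma pairwise_disjoint_dyadicAnnulus [PseudoMetricSpace X] (x : X) {R : ℝ} (hR : 0 < R) :
    Pairwise (Function.onFun Disjoint (dyadicAnnulus x R)) := by
  have hmono : Monotone fun k : ℤ => R * (2 : ℝ) ^ k :=
    fun _ _ h => mul_le_mul_of_nonneg_left (zpow_le_zpow_right₀ one_le_two h) hR.le
  intro j k hjk
  simpa only [Function.onFun, dyadicAnnulus, Order.succ_eq_add_one] using
    (hmono.pairwise_disjoint_on_Ico_succ hjk).preimage (dist x)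

lemma iUnion_dyadicAnnulus [MetricSpace X] (x : X) {R : ℝ} (hR : 0 < R) :
    ⋃ k, dyadicAnnulus x R k = {x}ᶜ := by
  ext z
  simp only [Set.mem_iUnion, dyadicAnnulus, Set.mem_preimage, Set.mem_Ico, Set.mem_compl_iff,
    Set.mem_singleton_iff]
  constructor
  · rintro ⟨k, hk, -⟩ rfl
    rw [dist_self] at hk
    exact (by positivity : 0 < R * (2 : ℝ) ^ k).not_ge hk
  · intro hzx
    obtain ⟨k, hk⟩ := exists_mem_Ico_zpow (div_pos (dist_pos.2 (Ne.symm hzx)) hR) one_lt_two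
    exact ⟨k, by simpa only [Set.mem_Ico, le_div_iff₀' hR, div_lt_iff₀' hR] using hk⟩

lemma setLIntegral_div_measure_ball_le [PseudoMetricSpace X] [MeasurableSpace X]
    {μ : Measure X} {x : X} {A : Set X} (hA : MeasurableSet A) {r s : ℝ} {c K : ENNReal}
    {g : X → ENNReal} (hg : ∀ z ∈ A, g z ≤ c) (hr : ∀ z ∈ A, r ≤ dist x z)
    (hs : A ⊆ ball x s) (hK : μ (ball x s) ≤ K * μ (ball x r)) :
    ∫⁻ z in A, g z / μ (ball x (dist x z)) ∂μ ≤ K * c := by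
  calc ∫⁻ z in A, g z / μ (ball x (dist x z)) ∂μ
      ≤ ∫⁻ _ in A, c / μ (ball x r) ∂μ := setLIntegral_mono' hA fun z hz =>
        ENNReal.div_le_div (hg z hz) (measure_mono (ball_subset_ball (hr z hz)))
    _ = c / μ (ball x r) * μ A := setLIntegral_const _ _
    _ ≤ c / μ (ball x r) * (K * μ (ball x r)) := by gcongr; exact (measure_mono hs).trans hK
    _ = K * (μ (ball x r) * (c / μ (ball x r))) := by ring
    _ ≤ K * c := by gcongr; exact ENNReal.mul_div_le

lemma measure_ball_two_zpow_succ_le [PseudoMetricSpace X] [MeasurableSpace X]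
    {μ : Measure X} {x : X} {n : ℕ}
    (hdoub : ∀ r R : ℝ, 0 < r → r ≤ R →
      μ (ball x R) ≤ ENNReal.ofReal ((R / r) ^ n) * μ (ball x r))
    {R : ℝ} (hR : 0 < R) (k : ℤ) :
    μ (ball x (R * 2 ^ (k + 1))) ≤ ENNReal.ofReal (2 ^ n) * μ (ball x (R * 2 ^ k)) := by
  have hr : 0 < R * (2 : ℝ) ^ k := by positivity
  have hratio : R * (2 : ℝ) ^ (k + 1) / (R * 2 ^ k) = 2 := by
    rw [zpow_add_one₀ two_ne_zero]; field_simp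
  simpa only [hratio] using hdoub _ _ hr
    (mul_le_mul_of_nonneg_left (zpow_le_zpow_right₀ one_le_two (Int.le_add_one le_rfl)) hR.le)

lemma lintegral_kernel_le_tsum_dyadicWeight [MetricSpace X] [MeasurableSpace X]
    [OpensMeasurableSpace X] {μ : Measure X} {x : X} {n : ℕ}
    (hdoub : ∀ r R : ℝ, 0 < r → r ≤ R →
      μ (ball x R) ≤ ENNReal.ofReal ((R / r) ^ n) * μ (ball x r))
    {σ R : ℝ} (hσ0 : 0 ≤ σ) (hσ2 : σ ≤ 2) (hR : 0 < R) :
    ∫⁻ z in {x}ᶜ,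
        ENNReal.ofReal ((2 - σ) * min (R ^ 2) (dist x z ^ 2) / dist x z ^ σ) /
          μ (ball x (dist x z)) ∂μ
      ≤ ENNReal.ofReal (2 ^ n * R ^ (2 - σ)) *
          ∑' k, ENNReal.ofReal ((2 - σ) * dyadicWeight σ k) := by
  have hkernel : ∀ k, ∀ z ∈ dyadicAnnulus x R k,
      (2 - σ) * min (R ^ 2) (dist x z ^ 2) / dist x z ^ σ
        ≤ R ^ (2 - σ) * ((2 - σ) * dyadicWeight σ k) := fun k z hz => by
    rw [mul_div_assoc, mul_left_comm]
    exact mul_le_mul_of_nonneg_left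
      (min_sq_div_rpow_le_dyadicWeight hR hσ0 hσ2 hz) (by linarith)
  rw [← iUnion_dyadicAnnulus x hR, lintegral_iUnion (measurableSet_dyadicAnnulus x R)
    (pairwise_disjoint_dyadicAnnulus x hR), ENNReal.ofReal_mul (by positivity), mul_assoc,
    ← ENNReal.tsum_mul_left, ← ENNReal.tsum_mul_left]
  refine ENNReal.tsum_le_tsum fun k => ?_
  rw [← ENNReal.ofReal_mul (by positivity)]
  exact setLIntegral_div_measure_ball_le (measurableSet_dyadicAnnulus x R k)
    (fun z hz => ENNReal.ofReal_le_ofReal (hkernel k z hz)) (fun z hz => hz.1)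
    (dyadicAnnulus_subset_ball x R k) (measure_ball_two_zpow_succ_le hdoub hR k)

end MetricMeasure

theorem kernel_integrability_general {X : Type*} [MetricSpace X] [MeasurableSpace X] [BorelSpace X]
    (μ : Measure X) (x : X) (n : ℕ)
    (hdoub : ∀ r R : ℝ, 0 < r → r ≤ R →
      μ (ball x R) ≤ ENNReal.ofReal ((R / r) ^ n) * μ (ball x r))
    (σ₀ : ℝ) (hσ₀ : σ₀ ∈ Set.Ioo (0 : ℝ) 2) :
    ∃ C > 0, ∀ σ ∈ Set.Ico σ₀ (2 : ℝ), ∀ R : ℝ, 0 < R →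
      ∫⁻ z in {x}ᶜ,
          ENNReal.ofReal ((2 - σ) * min (R ^ 2) (dist x z ^ 2) / dist x z ^ σ) /
            μ (ball x (dist x z)) ∂μ
        ≤ ENNReal.ofReal (C * R ^ (2 - σ)) := by
  obtain ⟨hσ₀0, -⟩ := hσ₀
  set C₀ := 2 / (1 - (2 : ℝ) ^ (-σ₀)) + 4 / Real.log 2
  have hC₀ : 0 < C₀ := by
    have : (2 : ℝ) ^ (-σ₀) < 1 := Real.rpow_lt_one_of_one_lt_of_neg one_lt_two (by linarith)
    have : 0 < 1 - (2 : ℝ) ^ (-σ₀) := by linarith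
    have := Real.log_pos one_lt_two
    positivity
  refine ⟨2 ^ n * C₀, mul_pos (by positivity) hC₀, fun σ ⟨hσ₀σ, hσ2⟩ R hR => ?_⟩
  calc _ ≤ ENNReal.ofReal (2 ^ n * R ^ (2 - σ)) *
          ∑' k, ENNReal.ofReal ((2 - σ) * dyadicWeight σ k) :=
        lintegral_kernel_le_tsum_dyadicWeight hdoub (hσ₀0.le.trans hσ₀σ) hσ2.le hR
    _ ≤ ENNReal.ofReal (2 ^ n * R ^ (2 - σ)) * ENNReal.ofReal C₀ := by
        gcongr; exact tsum_ofReal_dyadicWeight_le hσ₀0 hσ₀σ hσ2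
    _ = ENNReal.ofReal (2 ^ n * C₀ * R ^ (2 - σ)) := by
        rw [← ENNReal.ofReal_mul (by positivity)]; ring_nf

/-- **Integrability of the kernels** (Lemma 2.2 of the paper): on a metric measure space
satisfying the volume doubling property at `x` with exponent `n`, for every `σ₀ ∈ (0,2)`
there is `C = C(n,σ₀) > 0` such that for all `σ ∈ [σ₀,2)` and `R > 0`,
`(2−σ) ∫ min(R², d(x,z)²)/(μ(B(x,d(x,z))) d(x,z)^σ) dμ(z) ≤ C R^{2−σ}`. -/
theorem kernel_integrability {X : Type*} [MetricSpace X] [MeasurableSpace X] [BorelSpace X]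
    (μ : Measure X) (x : X) (n : ℕ) (hn : 1 ≤ n)
    (hpos : ∀ r : ℝ, 0 < r → 0 < μ (ball x r) ∧ μ (ball x r) < ⊤)
    (hdoub : ∀ r R : ℝ, 0 < r → r ≤ R →
      μ (ball x R) ≤ ENNReal.ofReal ((R / r) ^ n) * μ (ball x r))
    (σ₀ : ℝ) (hσ₀ : σ₀ ∈ Set.Ioo (0 : ℝ) 2) :
    ∃ C > 0, ∀ σ ∈ Set.Ico σ₀ (2 : ℝ), ∀ R : ℝ, 0 < R →
      ∫⁻ z in {x}ᶜ,
          ENNReal.ofReal ((2 - σ) * min (R ^ 2) (dist x z ^ 2) / dist x z ^ σ) /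
            μ (ball x (dist x z)) ∂μ
        ≤ ENNReal.ofReal (C * R ^ (2 - σ)) :=
  kernel_integrability_general μ x n hdoub σ₀ hσ₀
end

section
/- Let (X, d) be a metric space, μ a Borel measure on X, x ∈ X, and n ≥ 1. Assume 0 < μ(B(x,r)) < ∞ for every r > 0 and the volume doubling property at x: μ(B(x,R)) ≤ (R/r)ⁿ μ(B(x,r)) for all 0 < r ≤ R. Then for every σ ∈ (0,2) and every R > 0, ∫_{B(x,R)∖{x}} (2−σ) d(x,z)^{2−σ} / μ(B(x, d(x,z))) dμ(z) ≤ 2ⁿ · (2−σ)/(1 − 2^{−(2−σ)}) · R^{2−σ}; in particular the left-hand side is at most C(n) R^{2−σ} for a constant C(n) depending only on n. -/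
/-!
Cut `B(x,R) ∖ {x}` into the dyadic annuli `B(x, R/2^k) ∖ B(x, R/2^(k+1))`. On the `k`-th annulus
the numerator is at most `(2-σ) (R/2^k)^(2-σ)` and the denominator at least `μ(B(x, R/2^(k+1)))`,
while the annulus has measure at most `μ(B(x, R/2^k)) ≤ 2ⁿ μ(B(x, R/2^(k+1)))`; so the `k`-th
piece is at most `2ⁿ (2-σ) (R/2^k)^(2-σ)`, and these sum geometrically with ratio `2^{-(2-σ)}`.
-/

open MeasureTheory Metric

lemma ball_diff_singleton_subset_iUnion_dyadic_annuli {X : Type*} [MetricSpace X] (x : X) (R : ℝ) :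
    ball x R \ {x} ⊆ ⋃ k : ℕ, ball x (R / 2 ^ k) \ ball x (R / 2 ^ (k + 1)) := by
  rintro z ⟨hzR, hzx⟩
  have hd : 0 < dist z x := dist_pos.mpr hzx
  have hdR : dist z x < R := mem_ball.mp hzR
  have hfar : ∃ m : ℕ, R / 2 ^ m ≤ dist z x := by
    obtain ⟨m, hm⟩ := pow_unbounded_of_one_lt (R / dist z x) one_lt_two
    exact ⟨m, ((div_lt_comm₀ hd (by positivity)).mp hm).le⟩
  obtain ⟨k, hk, hk1⟩ :=
    Nat.exists_not_and_succ_of_not_zero_of_exists (by simpa using hdR.not_ge) hfar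
  exact Set.mem_iUnion.mpr ⟨k, mem_ball.mpr (not_le.mp hk), fun h => (mem_ball.mp h).not_ge hk1⟩

lemma setLIntegral_annulus_rpow_div_measure_ball_le {X : Type*} [PseudoMetricSpace X]
    [MeasurableSpace X] [OpensMeasurableSpace X] (μ : Measure X) (x : X) {c s r r' : ℝ}
    (hc : 0 ≤ c) (hs : 0 ≤ s) :
    ∫⁻ z in ball x r' \ ball x r, ENNReal.ofReal (c * dist x z ^ s) / μ (ball x (dist x z)) ∂μ
      ≤ ENNReal.ofReal (c * r' ^ s) * (μ (ball x r') / μ (ball x r)) := by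
  calc ∫⁻ z in ball x r' \ ball x r, ENNReal.ofReal (c * dist x z ^ s) / μ (ball x (dist x z)) ∂μ
      ≤ ∫⁻ _ in ball x r' \ ball x r, ENNReal.ofReal (c * r' ^ s) / μ (ball x r) ∂μ := by
        refine setLIntegral_mono' (measurableSet_ball.diff measurableSet_ball) fun z hz => ?_
        rw [Set.mem_sdiff, mem_ball', mem_ball', not_lt] at hz
        gcongr
        exacts [hz.1.le, hz.2]
      _ ≤ ENNReal.ofReal (c * r' ^ s) / μ (ball x r) * μ (ball x r') := by
        rw [setLIntegral_const]
        gcongr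
        exact Set.sdiff_subset
      _ = ENNReal.ofReal (c * r' ^ s) * (μ (ball x r') / μ (ball x r)) := by
        simp only [div_eq_mul_inv]
        ring

lemma tsum_ofReal_mul_div_two_pow_rpow {c R s : ℝ} (hc : 0 ≤ c) (hR : 0 ≤ R) (hs : 0 < s) :
    ∑' k : ℕ, ENNReal.ofReal (c * (R / 2 ^ k) ^ s)
      = ENNReal.ofReal (c * R ^ s / (1 - 2 ^ (-s))) := by
  set q : ℝ := 2 ^ (-s)
  have hq0 : 0 ≤ q := by positivity
  have hq1 : q < 1 := Real.rpow_lt_one_of_one_lt_of_neg one_lt_two (neg_lt_zero.mpr hs)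
  have hterm : ∀ k : ℕ, c * (R / 2 ^ k) ^ s = c * R ^ s * q ^ k := fun k => by
    rw [Real.div_rpow hR (by positivity), ← Real.rpow_pow_comm zero_le_two,
      show q = (2 ^ s)⁻¹ from Real.rpow_neg zero_le_two s, inv_pow, div_eq_mul_inv, mul_assoc]
  simp_rw [hterm]
  rw [← ENNReal.ofReal_tsum_of_nonneg (fun k => by positivity)
      ((summable_geometric_of_lt_one hq0 hq1).mul_left _),
    tsum_mul_left, tsum_geometric_of_lt_one hq0 hq1, div_eq_mul_inv]

theorem kernel_nearfield_general {X : Type*} [MetricSpace X] [MeasurableSpace X] [BorelSpace X]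
    (μ : Measure X) (x : X) (n : ℕ)
    (hdoub : ∀ r R : ℝ, 0 < r → r ≤ R →
      μ (ball x R) ≤ ENNReal.ofReal ((R / r) ^ n) * μ (ball x r))
    (σ : ℝ) (hσ : σ ∈ Set.Ioo (0 : ℝ) 2) (R : ℝ) (hR : 0 < R) :
    ∫⁻ z in ball x R \ {x},
        ENNReal.ofReal ((2 - σ) * dist x z ^ (2 - σ)) / μ (ball x (dist x z)) ∂μ
      ≤ ENNReal.ofReal (2 ^ n * ((2 - σ) / (1 - 2 ^ (-(2 - σ)))) * R ^ (2 - σ)) := by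
  have hs : 0 < 2 - σ := sub_pos.mpr hσ.2
  have hratio : ∀ k : ℕ, μ (ball x (R / 2 ^ k)) / μ (ball x (R / 2 ^ (k + 1)))
      ≤ ENNReal.ofReal (2 ^ n) := fun k => by
    refine ENNReal.div_le_of_le_mul ?_
    convert hdoub _ _ (by positivity) (div_le_div_of_nonneg_left hR.le (by positivity)
      (pow_le_pow_right₀ one_le_two (Nat.le_add_right k 1))) using 4
    field_simp
    ring
  calc _ ≤ ∑' k : ℕ, ∫⁻ z in ball x (R / 2 ^ k) \ ball x (R / 2 ^ (k + 1)),
          ENNReal.ofReal ((2 - σ) * dist x z ^ (2 - σ)) / μ (ball x (dist x z)) ∂μ :=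
        (lintegral_mono_set (ball_diff_singleton_subset_iUnion_dyadic_annuli x R)).trans
          (lintegral_iUnion_le _ _)
    _ ≤ ∑' k : ℕ, ENNReal.ofReal ((2 - σ) * (R / 2 ^ k) ^ (2 - σ)) * ENNReal.ofReal (2 ^ n) :=
        ENNReal.tsum_le_tsum fun k =>
          (setLIntegral_annulus_rpow_div_measure_ball_le μ x hs.le hs.le).trans
            (by gcongr; exact hratio k)
    _ = _ := by
      rw [ENNReal.tsum_mul_right, tsum_ofReal_mul_div_two_pow_rpow hs.le hR.le hs,
        ← ENNReal.ofReal_mul' (by positivity)]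
      congr 1
      ring

/-- **Near-field kernel estimate** (estimate (B_R) inside Lemma 2.2 of the paper): on a
metric measure space with the doubling property at `x` with exponent `n`, for every
`σ ∈ (0,2)` and `R > 0`,
`∫_{B(x,R)∖{x}} (2−σ) d(x,z)^{2−σ}/μ(B(x,d(x,z))) dμ(z) ≤ 2ⁿ (2−σ)/(1−2^{−(2−σ)}) R^{2−σ}`. -/
theorem kernel_nearfield {X : Type*} [MetricSpace X] [MeasurableSpace X] [BorelSpace X]
    (μ : Measure X) (x : X) (n : ℕ) (hn : 1 ≤ n)
    (hpos : ∀ r : ℝ, 0 < r → 0 < μ (ball x r) ∧ μ (ball x r) < ⊤)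
    (hdoub : ∀ r R : ℝ, 0 < r → r ≤ R →
      μ (ball x R) ≤ ENNReal.ofReal ((R / r) ^ n) * μ (ball x r))
    (σ : ℝ) (hσ : σ ∈ Set.Ioo (0 : ℝ) 2) (R : ℝ) (hR : 0 < R) :
    ∫⁻ z in ball x R \ {x},
        ENNReal.ofReal ((2 - σ) * dist x z ^ (2 - σ)) / μ (ball x (dist x z)) ∂μ
      ≤ ENNReal.ofReal (2 ^ n * ((2 - σ) / (1 - 2 ^ (-(2 - σ)))) * R ^ (2 - σ)) :=
  kernel_nearfield_general μ x n hdoub σ hσ R hR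
end

section
/- Let (X, d) be a metric space, μ a Borel measure on X, x ∈ X, and n ≥ 1. Assume 0 < μ(B(x,s)) < ∞ for every s > 0 and the volume doubling property at x: μ(B(x,2s)) ≤ 2ⁿ μ(B(x,s)) for all s > 0. Then for every σ ∈ (0,2), every α with 0 < α < σ, and every r > 0, ∫_{X∖B(x,r)} ((d(x,z)/r)^α − 1) / (μ(B(x, d(x,z))) · d(x,z)^σ) dμ(z) ≤ 2ⁿ (2^α − 1) / ((1 − 2^{α−σ})(1 − 2^{−σ})) · r^{−σ}. In particular, for fixed σ₀ ∈ (0,2) and σ ∈ [σ₀,2), α ∈ (0,σ₀), the constant is at most 2ⁿ(2^α−1)/((1−2^{α−σ₀})(1−2^{−σ₀})), which tends to 0 as α → 0. -/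
open MeasureTheory Metric

/-!
Split the complement of `B(x,r)` into the dyadic annuli `2ʲr ≤ d(x,z) < 2ʲ⁺¹r`. On the
`j`-th annulus the integrand is at most `r^{-σ} (2^{(j+1)α} - 1) 2^{-jσ} / μ(B(x,2ʲr))`, while
by doubling the annulus has measure at most `2ⁿ μ(B(x,2ʲr))`. Each annulus thus contributes at most
`2ⁿ r^{-σ} (2^{(j+1)α} - 1) 2^{-jσ}`, and these terms sum to the bound as the difference of two
geometric series, of ratios `2^{α-σ}` and `2^{-σ}`.
-/

lemma compl_ball_subset_iUnion_dyadic_annuli {X : Type*} [PseudoMetricSpace X] (x : X)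
    {r : ℝ} (hr : 0 < r) :
    (ball x r)ᶜ ⊆ ⋃ j : ℕ, ball x (2 * (2 ^ j * r)) \ ball x (2 ^ j * r) := by
  intro z hz
  rw [Set.mem_compl_iff, mem_ball, not_lt, ← one_le_div hr] at hz
  obtain ⟨j, hlow, hup⟩ := exists_nat_pow_near hz one_lt_two
  rw [le_div_iff₀ hr] at hlow
  rw [div_lt_iff₀ hr, pow_succ] at hup
  refine Set.mem_iUnion.2 ⟨j, ?_, ?_⟩
  · rw [mem_ball]
    linarith
  · rw [mem_ball, not_lt]
    exact hlow

lemma setLIntegral_div_measure_ball_annulus_le {X : Type*} [PseudoMetricSpace X]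
    [MeasurableSpace X] (μ : Measure X) (x : X) {ρ : ℝ} {D C : ENNReal} {f : X → ENNReal}
    (h0 : μ (ball x ρ) ≠ 0) (htop : μ (ball x ρ) ≠ ⊤)
    (hdoub : μ (ball x (2 * ρ)) ≤ D * μ (ball x ρ))
    (hf : ∀ z, dist x z ∈ Set.Ico ρ (2 * ρ) → f z ≤ C) :
    ∫⁻ z in ball x (2 * ρ) \ ball x ρ, f z / μ (ball x (dist x z)) ∂μ ≤ D * C := by
  have hpt : ∀ z ∈ ball x (2 * ρ) \ ball x ρ,
      f z / μ (ball x (dist x z)) ≤ C / μ (ball x ρ) := by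
    rintro z ⟨hz_in, hz_out⟩
    rw [mem_ball, dist_comm] at hz_in hz_out
    have hρ : ρ ≤ dist x z := not_lt.1 hz_out
    exact ENNReal.div_le_div (hf z ⟨hρ, hz_in⟩) (measure_mono (ball_subset_ball hρ))
  calc ∫⁻ z in ball x (2 * ρ) \ ball x ρ, f z / μ (ball x (dist x z)) ∂μ
      ≤ ∫⁻ _ in ball x (2 * ρ) \ ball x ρ, C / μ (ball x ρ) ∂μ :=
        setLIntegral_mono measurable_const hpt
    _ = C / μ (ball x ρ) * μ (ball x (2 * ρ) \ ball x ρ) := setLIntegral_const _ _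
    _ ≤ C / μ (ball x ρ) * (D * μ (ball x ρ)) := by
        gcongr
        exact (measure_mono Set.sdiff_subset).trans hdoub
    _ = D * C := by
        rw [mul_left_comm, ENNReal.div_mul_cancel h0 htop, mul_comm]

lemma holder_barrier_kernel_le_of_mem_Ico {r ρ d α σ : ℝ} (hr : 0 < r) (hα : 0 ≤ α)
    (hσ : 0 ≤ σ) (hrρ : r ≤ ρ) (hd : d ∈ Set.Ico ρ (2 * ρ)) :
    ((d / r) ^ α - 1) / d ^ σ ≤ ((2 * ρ / r) ^ α - 1) / ρ ^ σ := by
  have hρ : 0 < ρ := hr.trans_le hrρ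
  have hnum : 0 ≤ (2 * ρ / r) ^ α - 1 :=
    sub_nonneg.2 (Real.one_le_rpow ((one_le_div hr).2 (by linarith)) hα)
  have hd0 : 0 ≤ d := hρ.le.trans hd.1
  refine div_le_div₀ hnum (sub_le_sub_right ?_ 1) (by positivity)
    (Real.rpow_le_rpow hρ.le hd.1 hσ)
  exact Real.rpow_le_rpow (by positivity) (div_le_div_of_nonneg_right hd.2.le hr.le) hα

lemma holder_barrier_kernel_le_dyadic {r d α σ : ℝ} (hr : 0 < r) (hα : 0 ≤ α) (hσ : 0 ≤ σ)
    (j : ℕ) (hd : d ∈ Set.Ico (2 ^ j * r) (2 * (2 ^ j * r))) :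
    ((d / r) ^ α - 1) / d ^ σ ≤
      r ^ (-σ) * ((((2 : ℝ) ^ α) ^ (j + 1) - 1) * ((2 : ℝ) ^ (-σ)) ^ j) := by
  have hrρ : r ≤ 2 ^ j * r := le_mul_of_one_le_left hr.le (one_le_pow₀ one_le_two)
  refine (holder_barrier_kernel_le_of_mem_Ico hr hα hσ hrρ hd).trans_eq ?_
  have hratio : 2 * (2 ^ j * r) / r = (2 : ℝ) ^ (j + 1) := by
    field_simp
    ring
  rw [hratio, ← Real.rpow_pow_comm zero_le_two, Real.mul_rpow (by positivity) hr.le,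
    ← Real.rpow_pow_comm zero_le_two, Real.rpow_neg hr.le, Real.rpow_neg zero_le_two, inv_pow]
  field_simp

lemma hasSum_pow_succ_sub_one_mul_geometric {a q : ℝ} (ha : 0 ≤ a) (hq : 0 ≤ q)
    (haq : a * q < 1) (hq1 : q < 1) :
    HasSum (fun j : ℕ => (a ^ (j + 1) - 1) * q ^ j) ((a - 1) / ((1 - a * q) * (1 - q))) := by
  have hsum := ((hasSum_geometric_of_lt_one (by positivity) haq).mul_left a).sub
    (hasSum_geometric_of_lt_one hq hq1)
  have hterm :
      (fun j : ℕ => (a ^ (j + 1) - 1) * q ^ j) = fun j => a * (a * q) ^ j - q ^ j := by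
    ext j
    ring
  have hval : (a - 1) / ((1 - a * q) * (1 - q)) = a * (1 - a * q)⁻¹ - (1 - q)⁻¹ := by
    have h1 : 1 - a * q ≠ 0 := by linarith
    have h2 : 1 - q ≠ 0 := by linarith
    field_simp
    ring
  rw [hterm, hval]
  exact hsum

theorem tail_estimate_general {X : Type*} [MetricSpace X] [MeasurableSpace X]
    (μ : Measure X) (x : X) (n : ℕ)
    (hpos : ∀ s : ℝ, 0 < s → 0 < μ (ball x s) ∧ μ (ball x s) < ⊤)
    (hdoub : ∀ s : ℝ, 0 < s → μ (ball x (2 * s)) ≤ 2 ^ n * μ (ball x s))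
    (σ : ℝ) (hσ : σ ∈ Set.Ioo (0 : ℝ) 2) (α : ℝ) (hα : 0 < α) (hασ : α < σ)
    (r : ℝ) (hr : 0 < r) :
    ∫⁻ z in (ball x r)ᶜ,
        ENNReal.ofReal (((dist x z / r) ^ α - 1) / dist x z ^ σ) / μ (ball x (dist x z)) ∂μ
      ≤ ENNReal.ofReal (2 ^ n * (2 ^ α - 1) / ((1 - 2 ^ (α - σ)) * (1 - 2 ^ (-σ))) * r ^ (-σ)) := by
  have hσ0 : 0 < σ := hσ.1
  set a : ℝ := 2 ^ α
  set q : ℝ := 2 ^ (-σ)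
  have ha : 1 ≤ a := Real.one_le_rpow one_le_two hα.le
  have haq : a * q = 2 ^ (α - σ) := by rw [← Real.rpow_add two_pos, sub_eq_add_neg]
  have hsum := (hasSum_pow_succ_sub_one_mul_geometric (by positivity) (by positivity)
    (haq ▸ Real.rpow_lt_one_of_one_lt_of_neg one_lt_two (by linarith))
    (Real.rpow_lt_one_of_one_lt_of_neg one_lt_two (by linarith))).mul_left (r ^ (-σ))
  have hterm : ∀ j : ℕ, 0 ≤ r ^ (-σ) * ((a ^ (j + 1) - 1) * q ^ j) := fun j =>
    mul_nonneg (by positivity) (mul_nonneg (sub_nonneg.2 (one_le_pow₀ ha)) (by positivity))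
  calc _ ≤ ∑' j : ℕ, ∫⁻ z in ball x (2 * (2 ^ j * r)) \ ball x (2 ^ j * r),
          ENNReal.ofReal (((dist x z / r) ^ α - 1) / dist x z ^ σ) / μ (ball x (dist x z)) ∂μ :=
        (lintegral_mono_set (compl_ball_subset_iUnion_dyadic_annuli x hr)).trans
          (lintegral_iUnion_le _ _)
    _ ≤ ∑' j : ℕ, 2 ^ n * ENNReal.ofReal (r ^ (-σ) * ((a ^ (j + 1) - 1) * q ^ j)) :=
        ENNReal.tsum_le_tsum fun j =>
          have hρ : 0 < 2 ^ j * r := by positivity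
          setLIntegral_div_measure_ball_annulus_le μ x (hpos _ hρ).1.ne' (hpos _ hρ).2.ne
            (hdoub _ hρ) fun z hz => ENNReal.ofReal_le_ofReal
              (holder_barrier_kernel_le_dyadic hr hα.le hσ0.le j hz)
    _ = ENNReal.ofReal (2 ^ n * (r ^ (-σ) * ((a - 1) / ((1 - a * q) * (1 - q))))) := by
        rw [ENNReal.tsum_mul_left, ← ENNReal.ofReal_tsum_of_nonneg hterm hsum.summable,
          hsum.tsum_eq, ← ENNReal.ofReal_ofNat 2, ← ENNReal.ofReal_pow zero_le_two,
          ← ENNReal.ofReal_mul (by positivity)]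
    _ = _ := by
        rw [haq]
        ring_nf

/-- **Tail estimate for the Hölder growth barrier** (proved inside Lemma 7.1 of the paper):
on a metric measure space with the doubling property `μ(B(x,2s)) ≤ 2ⁿ μ(B(x,s))` at `x`,
for every `σ ∈ (0,2)`, `0 < α < σ` and `r > 0`,
`∫_{X∖B(x,r)} ((d(x,z)/r)^α − 1)/(μ(B(x,d(x,z))) d(x,z)^σ) dμ(z)
  ≤ 2ⁿ (2^α − 1)/((1 − 2^{α−σ})(1 − 2^{−σ})) r^{−σ}`. -/
theorem tail_estimate {X : Type*} [MetricSpace X] [MeasurableSpace X] [BorelSpace X]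
    (μ : Measure X) (x : X) (n : ℕ) (hn : 1 ≤ n)
    (hpos : ∀ s : ℝ, 0 < s → 0 < μ (ball x s) ∧ μ (ball x s) < ⊤)
    (hdoub : ∀ s : ℝ, 0 < s → μ (ball x (2 * s)) ≤ 2 ^ n * μ (ball x s))
    (σ : ℝ) (hσ : σ ∈ Set.Ioo (0 : ℝ) 2) (α : ℝ) (hα : 0 < α) (hασ : α < σ)
    (r : ℝ) (hr : 0 < r) :
    ∫⁻ z in (ball x r)ᶜ,
        ENNReal.ofReal (((dist x z / r) ^ α - 1) / dist x z ^ σ) / μ (ball x (dist x z)) ∂μ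
      ≤ ENNReal.ofReal (2 ^ n * (2 ^ α - 1) / ((1 - 2 ^ (α - σ)) * (1 - 2 ^ (-σ))) * r ^ (-σ)) :=
  tail_estimate_general μ x n hpos hdoub σ hσ α hα hασ r hr
end
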